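/- Consider $n \geq 2$ agents with states $x_i \in \mathbb{R}$ evolving by $\dot{x}_i = -w_i\,\mathrm{sign}(x_i - x_{i+1})$ (indices mod $n$) with all gains $w_i > 0$. Then there exist a finite time $t_f \geq 0$ and a value $X_f \in \mathbb{R}$ such that $x_i(t) = X_f$ for all $i$ and all $t \geq t_f$, and moreover $t_f \leq (\max_i x_i(0) - \min_i x_i(0))/(w_k + w_q)$ where $w_k, w_q$ are the two smallest gains. -/

import Mathlib

/-!
Between two consecutive switching instants every sign `sign (x i - x (i + 1))` is constant.
Indeed, if the gap `x i - x (i + 1)` vanished at some instant `p` but not at a nearby instant `t`,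
then, taking `p` to be a zero closest to `t`, the agent `x i` would have derivative `0` at `p`
and constant slope `∓ w i ≠ 0` between `p` and `t`, which is impossible. So the trajectories are
affine on each such piece. If the agents disagree at the end `b` of a piece, some maximiser `i`
at `b` is strictly above its target `i + 1`, hence it descended at speed `w i` during the whole
piece; symmetrically some minimiser `j ≠ i` ascended at speed `w j`. The spread `max - min`
therefore shrinks at rate at least `w i + w j ≥ w k + w q`, and a continuous induction over
`[0, ∞)` bounds it by `max 0 (D - (w k + w q) t)`, `D` being the initial spread. Once all
agents agree, every velocity `- w i * sign 0` vanishes, so the common value no longer moves.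
-/

open Set Filter Topology

theorem eq_add_mul_sub_of_hasDerivAt_Ioo {f : ℝ → ℝ} {a b c t : ℝ}
    (hf : ContinuousOn f (Icc a b)) (hd : ∀ z ∈ Ioo a b, HasDerivAt f c z) (ht : t ∈ Icc a b) :
    f t = f a + c * (t - a) := by
  rcases ht.1.eq_or_lt with rfl | hat
  · simp
  obtain ⟨ξ, -, hslope⟩ := exists_hasDerivAt_eq_slope f (fun _ => c) hat
    (hf.mono (Icc_subset_Icc_right ht.2)) fun z hz => hd z ⟨hz.1, hz.2.trans_le ht.2⟩
  rw [eq_div_iff (sub_ne_zero.2 hat.ne')] at hslope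
  linarith

theorem HasDerivAt.eq_of_forall_mem_Ioo {f : ℝ → ℝ} {a b c d x : ℝ} (hfx : HasDerivAt f d x)
    (hab : a < b) (hx : x ∈ Icc a b) (hf : ContinuousOn f (Icc a b))
    (hd : ∀ z ∈ Ioo a b, HasDerivAt f c z) : d = c := by
  have hline : HasDerivAt (fun z => f a + c * (z - a)) c x := by
    simpa using ((hasDerivAt_id x).sub_const a).const_mul c |>.const_add (f a)
  exact (uniqueDiffOn_Icc hab x hx).eq_deriv _ hfx.hasDerivWithinAt
    (hline.hasDerivWithinAt.congr_of_mem (fun z hz => eq_add_mul_sub_of_hasDerivAt_Ioo hf hd hz) hx)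

theorem IsPreconnected.sign_eq_of_ne_zero {I : Set ℝ} {g : ℝ → ℝ} (hI : IsPreconnected I)
    (hg : ContinuousOn g I) (hne : ∀ z ∈ I, g z ≠ 0) {a b : ℝ} (ha : a ∈ I) (hb : b ∈ I) :
    Real.sign (g a) = Real.sign (g b) := by
  have no_cross : ∀ {a b}, a ∈ I → b ∈ I → g a < 0 → 0 < g b → False := fun ha hb h₁ h₂ => by
    obtain ⟨z, hz, hz₀⟩ := hI.intermediate_value ha hb hg ⟨h₁.le, h₂.le⟩
    exact hne z hz hz₀
  rcases (hne a ha).lt_or_gt with ha' | ha' <;> rcases (hne b hb).lt_or_gt with hb' | hb'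
  · rw [Real.sign_of_neg ha', Real.sign_of_neg hb']
  · exact (no_cross ha hb ha' hb').elim
  · exact (no_cross hb ha hb' ha').elim
  · rw [Real.sign_of_pos ha', Real.sign_of_pos hb']

theorem eq_of_hasDerivAt_mul_sign_sub {f g : ℝ → ℝ} {a b c t₀ t : ℝ} (hc : c ≠ 0)
    (hg : ContinuousOn g (Ioo a b))
    (hf : ∀ z ∈ Ioo a b, HasDerivAt f (c * Real.sign (f z - g z)) z)
    (ht₀ : t₀ ∈ Ioo a b) (h₀ : f t₀ = g t₀) (ht : t ∈ Ioo a b) : f t = g t := by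
  by_contra hne
  set d : ℝ → ℝ := fun z => f z - g z
  have hsub : uIcc t₀ t ⊆ Ioo a b := ordConnected_Ioo.uIcc_subset ht₀ ht
  have hfc : ContinuousOn f (Ioo a b) := fun z hz => (hf z hz).continuousAt.continuousWithinAt
  have hd : ContinuousOn d (uIcc t₀ t) := (hfc.sub hg).mono hsub
  have hK : IsCompact (uIcc t₀ t ∩ d ⁻¹' {0}) :=
    isCompact_uIcc.of_isClosed_subset (hd.preimage_isClosed_of_isClosed isClosed_Icc
      isClosed_singleton) inter_subset_left
  -- `p` is a zero of `d` closest to `t`, so `d` has no zero strictly between `p` and `t`.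
  obtain ⟨p, ⟨hp, hp₀⟩, hmin⟩ := hK.exists_isMinOn ⟨t₀, left_mem_uIcc, sub_eq_zero.2 h₀⟩
    (continuous_abs.comp (continuous_id.sub continuous_const)).continuousOn (f := fun z => |z - t|)
  have hpt : p ≠ t := by rintro rfl; exact hne (sub_eq_zero.1 hp₀)
  have hpJ : p ∈ Icc (min p t) (max p t) := ⟨min_le_left _ _, le_max_left _ _⟩
  have hJ : Icc (min p t) (max p t) ⊆ uIcc t₀ t := uIcc_subset_uIcc hp right_mem_uIcc
  have hdJ : ∀ z ∈ Ioo (min p t) (max p t), d z ≠ 0 := by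
    intro z hz hz₀
    have hcloser : |z - t| < |p - t| := by
      rcases hpt.lt_or_gt with h | h
      · rw [min_eq_left h.le, max_eq_right h.le] at hz
        rw [abs_of_neg (by linarith [hz.2]), abs_of_neg (by linarith)]; linarith [hz.1]
      · rw [min_eq_right h.le, max_eq_left h.le] at hz
        rw [abs_of_pos (by linarith [hz.1]), abs_of_pos (by linarith)]; linarith [hz.2]
    exact hcloser.not_ge (hmin ⟨hJ (Ioo_subset_Icc_self hz), hz₀⟩)
  obtain ⟨m, hm⟩ := nonempty_Ioo.2 (min_lt_max.2 hpt)
  have hderiv : ∀ z ∈ Ioo (min p t) (max p t), HasDerivAt f (c * Real.sign (d m)) z :=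
    fun z hz => by
      rw [← isPreconnected_Ioo.sign_eq_of_ne_zero (hd.mono (Ioo_subset_Icc_self.trans hJ)) hdJ
        hz hm]
      exact hf z (hsub (hJ (Ioo_subset_Icc_self hz)))
  have hfp : HasDerivAt f 0 p := by
    simpa [show f p - g p = 0 from hp₀] using hf p (hsub (hJ hpJ))
  have hslope := hfp.eq_of_forall_mem_Ioo (min_lt_max.2 hpt) hpJ (hfc.mono (hJ.trans hsub)) hderiv
  rcases Real.sign_apply_eq_of_ne_zero _ (hdJ m hm) with h | h <;>
    rw [h] at hslope <;> exact hc (by linarith)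

theorem sign_sub_eq_of_hasDerivAt_mul_sign_sub {f g : ℝ → ℝ} {a b c t t' : ℝ} (hc : c ≠ 0)
    (hg : ContinuousOn g (Ioo a b))
    (hf : ∀ z ∈ Ioo a b, HasDerivAt f (c * Real.sign (f z - g z)) z)
    (ht : t ∈ Ioo a b) (ht' : t' ∈ Ioo a b) :
    Real.sign (f t - g t) = Real.sign (f t' - g t') := by
  by_cases hzero : ∃ z ∈ Ioo a b, f z = g z
  · obtain ⟨z, hz, hfz⟩ := hzero
    rw [eq_of_hasDerivAt_mul_sign_sub hc hg hf hz hfz ht,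
      eq_of_hasDerivAt_mul_sign_sub hc hg hf hz hfz ht', sub_self, sub_self]
  · push Not at hzero
    have hfc : ContinuousOn f (Ioo a b) := fun z hz => (hf z hz).continuousAt.continuousWithinAt
    exact isPreconnected_Ioo.sign_eq_of_ne_zero (hfc.sub hg)
      (fun z hz => sub_ne_zero.2 (hzero z hz)) ht ht'

theorem Set.Finite.eventually_nhdsGT_notMem {S : Set ℝ} (hS : S.Finite) (t : ℝ) :
    ∀ᶠ z in 𝓝[>] t, z ∉ S := by
  filter_upwards [mem_nhdsWithin_of_mem_nhds ((hS.sdiff (t := {t})).isClosed.compl_mem_nhds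
    (by simp)), self_mem_nhdsWithin] with z hz hzt hzS
  exact hz ⟨hzS, ne_of_gt hzt⟩

theorem IsClosed.Ici_subset_of_forall_Ioo_subset_compl {G S : Set ℝ} {t₀ : ℝ} (hG : IsClosed G)
    (hS : S.Finite) (h₀ : t₀ ∈ G)
    (hstep : ∀ t ∈ G, t₀ ≤ t → ∀ u, t < u → Ioo t u ⊆ Sᶜ → u ∈ G) : Ici t₀ ⊆ G := by
  intro t' ht'
  refine (hG.inter isClosed_Icc).Icc_subset_of_forall_mem_nhdsWithin h₀ (fun t ht => ?_)
    ⟨ht', le_rfl⟩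
  obtain ⟨u, hu, hfree⟩ := mem_nhdsGT_iff_exists_Ioo_subset.1 (hS.eventually_nhdsGT_notMem t)
  exact mem_nhdsGT_iff_exists_Ioo_subset.2 ⟨u, hu, fun v hv =>
    hstep t ht.1 ht.2.1 v hv.1 ((Ioo_subset_Ioo_right hv.2.le).trans hfree)⟩

open Fin.CommRing in
theorem Fin.forall_of_imp_add_one {n : ℕ} [NeZero n] {P : Fin n → Prop}
    (h : ∀ i, P i → P (i + 1)) {i₀ : Fin n} (h₀ : P i₀) (j : Fin n) : P j := by
  have key : ∀ m : ℕ, P (i₀ + (m : Fin n)) := by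
    intro m
    induction m with
    | zero => simpa using h₀
    | succ m ih => simpa [add_assoc] using h _ ih
  simpa using key (j - i₀ : Fin n)

theorem Fin.exists_forall_le_and_add_one_lt {n : ℕ} [NeZero n] {β : Type*} [LinearOrder β]
    (f : Fin n → β) (hf : ¬ ∀ i j, f i = f j) : ∃ i, (∀ j, f j ≤ f i) ∧ f (i + 1) < f i := by
  obtain ⟨m, hm⟩ := Finite.exists_max f
  by_contra! h
  have hall : ∀ j, f j = f m :=
    Fin.forall_of_imp_add_one (P := fun j => f j = f m)
      (fun i hi => le_antisymm (hm _) (hi ▸ h i (hi ▸ hm))) rfl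
  exact hf fun i j => (hall i).trans (hall j).symm

theorem add_le_add_of_ne {ι : Type*} {w : ι → ℝ} {k q : ι}
    (hsmall : ∀ j, j ≠ k → j ≠ q → w k ≤ w j ∧ w q ≤ w j) {i j : ι} (hij : i ≠ j) :
    w k + w q ≤ w i + w j := by
  rcases eq_or_ne i k with rfl | hik
  · rcases eq_or_ne j q with rfl | hjq
    · rfl
    · linarith [(hsmall j hij.symm hjq).2]
  rcases eq_or_ne i q with rfl | hiq
  · rcases eq_or_ne j k with rfl | hjk
    · rw [add_comm]
    · linarith [(hsmall j hjk hij.symm).1]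
  have hi := hsmall i hik hiq
  rcases eq_or_ne j k with rfl | hjk
  · linarith [hi.2]
  rcases eq_or_ne j q with rfl | hjq
  · linarith [hi.1]
  · linarith [hi.1, (hsmall j hjk hjq).2]

namespace CyclicPursuit

variable {n : ℕ} [NeZero n] {w : Fin n → ℝ} {x : Fin n → ℝ → ℝ} {s : Set ℝ}

def IsSolutionOn (w : Fin n → ℝ) (x : Fin n → ℝ → ℝ) (s : Set ℝ) : Prop :=
  ∀ i, ∀ t ∈ s, HasDerivAt (x i) (-(w i) * Real.sign (x i t - x (i + 1) t)) t

theorem IsSolutionOn.mono {s' : Set ℝ} (h : IsSolutionOn w x s) (hs : s' ⊆ s) :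
    IsSolutionOn w x s' :=
  fun i t ht => h i t (hs ht)

theorem IsSolutionOn.neg (h : IsSolutionOn w x s) : IsSolutionOn w (-x) s := fun i t ht => by
  refine (h i t ht).neg.congr_deriv ?_
  simp only [Pi.neg_apply, neg_sub_neg]
  rw [← neg_sub (x i t), Real.sign_neg, mul_neg]

theorem IsSolutionOn.apply_eq_sub_of_lt {a b : ℝ} (h : IsSolutionOn w x (Ioo a b)) {i : Fin n}
    (hw : w i ≠ 0) (hx : ∀ i, ContinuousOn (x i) (Icc a b)) (hab : a < b)
    (hlt : x (i + 1) b < x i b) : x i b = x i a - w i * (b - a) := by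
  have hd : ContinuousWithinAt (fun t => x i t - x (i + 1) t) (Ioo a b) b :=
    ((hx i).sub (hx (i + 1)) b (right_mem_Icc.2 hab.le)).mono Ioo_subset_Icc_self
  have : (𝓝[Ioo a b] b).NeBot := mem_closure_iff_nhdsWithin_neBot.1 (by
    rw [closure_Ioo hab.ne]; exact right_mem_Icc.2 hab.le)
  obtain ⟨t₀, ht₀pos, ht₀⟩ :=
    ((hd.eventually_const_lt (sub_pos.2 hlt)).and self_mem_nhdsWithin).exists
  have hderiv : ∀ t ∈ Ioo a b, HasDerivAt (x i) (-(w i)) t := fun t ht => by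
    have hsign := sign_sub_eq_of_hasDerivAt_mul_sign_sub (neg_ne_zero.2 hw)
      ((hx (i + 1)).mono Ioo_subset_Icc_self) (h i) ht ht₀
    simpa [hsign, Real.sign_of_pos ht₀pos] using h i t ht
  linarith [eq_add_mul_sub_of_hasDerivAt_Ioo (hx i) hderiv (right_mem_Icc.2 hab.le)]

theorem IsSolutionOn.exists_sub_le {a b c : ℝ} (h : IsSolutionOn w x (Ioo a b))
    (hw : ∀ i, w i ≠ 0) (hx : ∀ i, ContinuousOn (x i) (Icc a b)) (hab : a < b)
    (hc : ∀ i j, i ≠ j → c ≤ w i + w j) (hb : ¬ ∀ i j, x i b = x j b) :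
    ∃ i j, ∀ p q, x p b - x q b ≤ x i a - x j a - c * (b - a) := by
  obtain ⟨i, hi_max, hi⟩ := Fin.exists_forall_le_and_add_one_lt (fun p => x p b) hb
  obtain ⟨j, hj_min, hj⟩ := Fin.exists_forall_le_and_add_one_lt (fun p => -x p b)
    fun h' => hb fun p q => neg_inj.1 (h' p q)
  have hxi := h.apply_eq_sub_of_lt (hw i) hx hab hi
  have hxj := h.neg.apply_eq_sub_of_lt (hw j) (fun p => (hx p).neg) hab hj
  simp only [Pi.neg_apply] at hj_min hj hxj
  have hij : i ≠ j := by
    rintro rfl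
    linarith
  refine ⟨i, j, fun p q => ?_⟩
  have := mul_le_mul_of_nonneg_right (hc i j hij) (sub_nonneg.2 hab.le)
  linarith [hi_max p, hj_min q]

theorem IsSolutionOn.sub_le_max {S : Set ℝ} {c D : ℝ} (h : IsSolutionOn w x (Ici 0 \ S))
    (hS : S.Finite) (hw : ∀ i, w i ≠ 0) (hx : ∀ i, Continuous (x i)) (hc₀ : 0 ≤ c)
    (hc : ∀ i j, i ≠ j → c ≤ w i + w j) (hD : ∀ i j, x i 0 - x j 0 ≤ D) {t : ℝ} (ht : 0 ≤ t)
    (i j : Fin n) : x i t - x j t ≤ max 0 (D - c * t) := by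
  have hG : IsClosed {t | ∀ i j, x i t - x j t ≤ max 0 (D - c * t)} := by
    simp only [ofPred_forall]
    exact isClosed_iInter fun i => isClosed_iInter fun j =>
      isClosed_le ((hx i).sub (hx j)) (by fun_prop)
  refine hG.Ici_subset_of_forall_Ioo_subset_compl hS
    (fun i j => le_max_of_le_right (by simpa using hD i j)) ?_ ht i j
  intro t ht ht₀ u htu hfree
  by_cases hcons : ∀ i j, x i u = x j u
  · intro i j
    simp [hcons i j]
  obtain ⟨i₀, j₀, hdecay⟩ := (h.mono fun z hz => ⟨ht₀.trans hz.1.le, hfree hz⟩).exists_sub_le hw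
    (fun i => (hx i).continuousOn) htu hc hcons
  have hφ : max 0 (D - c * t) ≤ max 0 (D - c * u) + c * (u - t) := by
    have := mul_nonneg hc₀ (sub_nonneg.2 htu.le)
    apply max_le <;> linarith [le_max_left 0 (D - c * u), le_max_right 0 (D - c * u)]
  intro i j
  linarith [hdecay i j, ht i₀ j₀]

theorem IsSolutionOn.apply_eq_of_consensus {S : Set ℝ} {T : ℝ} (h : IsSolutionOn w x (Ici T \ S))
    (hS : S.Finite) (hx : ∀ i, Continuous (x i)) (hcons : ∀ t, T ≤ t → ∀ i j, x i t = x j t)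
    {t : ℝ} (ht : T ≤ t) (i : Fin n) : x i t = x i T := by
  have hG : IsClosed {t | ∀ i, x i t = x i T} := by
    simp only [ofPred_forall]
    exact isClosed_iInter fun i => isClosed_eq (hx i) continuous_const
  refine hG.Ici_subset_of_forall_Ioo_subset_compl hS (fun i => rfl) ?_ ht i
  intro t ht hTt u htu hfree i
  have hderiv : ∀ z ∈ Ioo t u, HasDerivAt (x i) 0 z := fun z hz => by
    simpa [hcons z (hTt.trans hz.1.le) i (i + 1)] using h i z ⟨hTt.trans hz.1.le, hfree hz⟩
  rw [← ht i]
  simpa using eq_add_mul_sub_of_hasDerivAt_Ioo (hx i).continuousOn hderiv (right_mem_Icc.2 htu.le)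

end CyclicPursuit

theorem stmt_6_general (n : ℕ) [NeZero n]
    (x : Fin n → ℝ → ℝ) (w : Fin n → ℝ) (hw : ∀ i, 0 < w i)
    (hcont : ∀ i, Continuous (x i))
    (S : Set ℝ) (hS : S.Finite)
    (hdyn : ∀ i, ∀ t ∈ Set.Ici (0 : ℝ) \ S,
      HasDerivAt (x i) (-(w i) * Real.sign (x i t - x (i + 1) t)) t)
    (k q : Fin n)
    (hsmall : ∀ j, j ≠ k → j ≠ q → w k ≤ w j ∧ w q ≤ w j)
    (Xm XM : ℝ)
    (hXm : IsLeast (Set.range fun i => x i 0) Xm)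
    (hXM : IsGreatest (Set.range fun i => x i 0) XM) :
    ∃ tf Xf : ℝ, 0 ≤ tf ∧ tf ≤ (XM - Xm) / (w k + w q) ∧
      ∀ i, ∀ t, tf ≤ t → x i t = Xf := by
  set T := (XM - Xm) / (w k + w q)
  have hc : 0 < w k + w q := add_pos (hw k) (hw q)
  have hD : ∀ i j, x i 0 - x j 0 ≤ XM - Xm := fun i j =>
    sub_le_sub (hXM.2 ⟨i, rfl⟩) (hXm.2 ⟨j, rfl⟩)
  have hT : 0 ≤ T := div_nonneg (by simpa using hD k k) hc.le
  have hcons : ∀ t, T ≤ t → ∀ i j, x i t = x j t := by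
    intro t ht i j
    have hφ : max 0 (XM - Xm - (w k + w q) * t) = 0 :=
      max_eq_left (by linarith [(div_le_iff₀ hc).1 ht])
    have hspread := CyclicPursuit.IsSolutionOn.sub_le_max (w := w) hdyn hS (fun i => (hw i).ne')
      hcont hc.le (fun i j => add_le_add_of_ne hsmall) hD (hT.trans ht)
    exact le_antisymm (by linarith [hspread i j]) (by linarith [hspread j i])
  have hdynT : CyclicPursuit.IsSolutionOn w x (Ici T \ S) :=
    CyclicPursuit.IsSolutionOn.mono hdyn (sdiff_subset_sdiff_left (Ici_subset_Ici.2 hT))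
  exact ⟨T, x k T, hT, le_rfl, fun i t ht =>
    (hdynT.apply_eq_of_consensus hS hcont hcons ht i).trans (hcons T le_rfl i k)⟩

/-- Theorem 1: finite-time heterogeneous cyclic pursuit with positive gains reaches
    consensus at or before (max − min)/(w_k + w_q), where w_k, w_q are the two smallest gains. -/
theorem stmt_6 (n : ℕ) [NeZero n] (hn : 2 ≤ n)
    (x : Fin n → ℝ → ℝ) (w : Fin n → ℝ) (hw : ∀ i, 0 < w i)
    (hcont : ∀ i, Continuous (x i))
    (S : Set ℝ) (hS : S.Finite)
    (hdyn : ∀ i, ∀ t ∈ Set.Ici (0 : ℝ) \ S,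
      HasDerivAt (x i) (-(w i) * Real.sign (x i t - x (i + 1) t)) t)
    (k q : Fin n) (hkq : k ≠ q)
    (hsmall : ∀ j, j ≠ k → j ≠ q → w k ≤ w j ∧ w q ≤ w j)
    (Xm XM : ℝ)
    (hXm : IsLeast (Set.range fun i => x i 0) Xm)
    (hXM : IsGreatest (Set.range fun i => x i 0) XM) :
    ∃ tf Xf : ℝ, 0 ≤ tf ∧ tf ≤ (XM - Xm) / (w k + w q) ∧
      ∀ i, ∀ t, tf ≤ t → x i t = Xf :=
  stmt_6_general n x w hw hcont S hS hdyn k q hsmall Xm XM hXm hXM
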